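/- For every n ≥ 2, tree-α(C(K̄_n)) = n − 1, where K̄_n is the edgeless graph on n vertices and C denotes the 1-completion (so C(K̄_n) is the complete graph K_n with every edge subdivided once). -/

import Mathlib

/-!
Lower bound. The subtrees of a tree-decomposition belonging to the `n` branch vertices either
pairwise meet, and then by the Helly property of subtrees one bag holds all of them, or the
subtrees of some `u` and `v` are disjoint. In that case an edge `xy` of the tree separates them,
so the bags at `x` and `y` meet every path from `v` to `u`; the path `v, vu, u` and the `n - 2`
paths `v, vw, w, wu, u` have pairwise non-adjacent interiors, so `n - 1` independent vertices
lie in the bag at `x`. Both tree facts come from cutting the tree at one edge.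

Upper bound. Fix a branch vertex `v₀`. A star whose centre holds all branch vertices but `v₀`
together with the subdivision vertices at `v₀`, with one leaf holding `v₀` and those subdivision
vertices, and one leaf `{a, b, ab}` for every pair avoiding `v₀`, is a tree-decomposition, and each
of its bags is covered by `n - 1` cliques.
-/

open SimpleGraph

structure TreeDecomp {V : Type} (G : SimpleGraph V) where
  ι : Type
  tree : SimpleGraph ι
  isTree : tree.IsTree
  bag : ι → Finset V
  covers_edge : ∀ ⦃u v : V⦄, G.Adj u v → ∃ t, u ∈ bag t ∧ v ∈ bag t
  support_connected : ∀ v : V, (tree.induce {t | v ∈ bag t}).Connected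

noncomputable def indepNum {V : Type} (G : SimpleGraph V) (s : Set V) : ℕ :=
  sSup {n | ∃ t : Finset V, ↑t ⊆ s ∧ (↑t : Set V).Pairwise (fun a b => ¬ G.Adj a b) ∧ t.card = n}

noncomputable def alpha {V : Type} (G : SimpleGraph V) : ℕ := indepNum G Set.univ

noncomputable def chiNat {V : Type} (G : SimpleGraph V) : ℕ := G.chromaticNumber.toNat

noncomputable def tw {V : Type} (G : SimpleGraph V) : ℕ :=
  sInf {w | ∃ D : TreeDecomp G, ∀ t, (D.bag t).card ≤ w + 1}

noncomputable def treeAlpha {V : Type} (G : SimpleGraph V) : ℕ :=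
  sInf {k | ∃ D : TreeDecomp G, ∀ t, indepNum G ↑(D.bag t) ≤ k}

noncomputable def treeChi {V : Type} (G : SimpleGraph V) : ℕ :=
  sInf {k | ∃ D : TreeDecomp G, ∀ t, chiNat (G.induce ↑(D.bag t)) ≤ k}

noncomputable def treeTw {V : Type} (G : SimpleGraph V) : ℕ :=
  sInf {k | ∃ D : TreeDecomp G, ∀ t, tw (G.induce ↑(D.bag t)) ≤ k}

noncomputable def omegaNum {V : Type} (G : SimpleGraph V) : ℕ :=
  sSup {n | ∃ t : Finset V, G.IsClique ↑t ∧ t.card = n}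

def completion {V : Type} (H : SimpleGraph V) :
    SimpleGraph (V ⊕ {p : Sym2 V // ¬ p.IsDiag ∧ p ∉ H.edgeSet}) :=
  SimpleGraph.fromRel (fun x y =>
    match x, y with
    | .inl u, .inl v => H.Adj u v
    | .inl u, .inr p => u ∈ p.1
    | _, _ => False)

namespace SimpleGraph

variable {ι : Type*} {T : SimpleGraph ι} {x y : ι}

def edgeSide (T : SimpleGraph ι) (x y : ι) : Set ι :=
  {z | (T.deleteEdges {s(x, y)}).Reachable x z}

lemma mem_edgeSide_self : x ∈ T.edgeSide x y := Reachable.refl x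

lemma IsAcyclic.notMem_edgeSide (hT : T.IsAcyclic) (hxy : T.Adj x y) : y ∉ T.edgeSide x y :=
  isBridge_iff.mp (isAcyclic_iff_forall_adj_isBridge.mp hT hxy)

lemma IsAcyclic.eq_of_adj_of_mem_edgeSide (hT : T.IsAcyclic) (hxy : T.Adj x y) {a b : ι}
    (hab : T.Adj a b) (ha : a ∈ T.edgeSide x y) (hb : b ∉ T.edgeSide x y) : a = x ∧ b = y := by
  have he : s(a, b) = s(x, y) := by
    by_contra hne
    exact hb (ha.trans (Adj.reachable ((deleteEdges_adj ..).mpr ⟨hab, by simpa using hne⟩)))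
  rcases Sym2.eq_iff.mp he with h | ⟨rfl, rfl⟩
  · exact h
  · exact absurd ha (hT.notMem_edgeSide hxy)

lemma IsAcyclic.mem_of_mem_edgeSide_of_notMem (hT : T.IsAcyclic) (hxy : T.Adj x y) {S : Set ι}
    (hS : (T.induce S).Preconnected) {a b : ι} (haS : a ∈ S) (hbS : b ∈ S)
    (ha : a ∈ T.edgeSide x y) (hb : b ∉ T.edgeSide x y) : x ∈ S ∧ y ∈ S := by
  obtain ⟨w⟩ := hS ⟨a, haS⟩ ⟨b, hbS⟩
  obtain ⟨d, -, hd₁, hd₂⟩ := w.exists_boundary_dart {z : S | z.1 ∈ T.edgeSide x y} ha hb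
  obtain ⟨rfl, rfl⟩ := hT.eq_of_adj_of_mem_edgeSide hxy d.adj hd₁ hd₂
  exact ⟨d.fst.2, d.snd.2⟩

lemma Walk.exists_adj_mem_edgeSide {S : Set ι} {c c' : ι} (w : T.Walk c c') (hc : c ∉ S)
    (hc' : c' ∈ S) : ∃ x ∉ S, ∃ y ∈ S, T.Adj x y ∧ c ∈ T.edgeSide x y := by
  induction w with
  | nil => exact absurd hc' hc
  | @cons c d c' hcd w ih =>
    by_cases hd : d ∈ S
    · exact ⟨c, hc, d, hd, hcd, mem_edgeSide_self⟩
    · obtain ⟨x, hx, y, hy, hxy, hdx⟩ := ih hd hc'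
      refine ⟨x, hx, y, hy, hxy, hdx.trans (Adj.reachable ?_)⟩
      refine (deleteEdges_adj ..).mpr ⟨hcd.symm, fun he => ?_⟩
      rcases Sym2.eq_iff.mp he with ⟨-, rfl⟩ | ⟨rfl, -⟩ <;> contradiction

lemma IsTree.exists_adj_separating (hT : T.IsTree) {S : Set ι} (hS : (T.induce S).Preconnected)
    (hSne : S.Nonempty) {c : ι} (hc : c ∉ S) :
    ∃ x y, T.Adj x y ∧ y ∈ S ∧ c ∈ T.edgeSide x y ∧ ∀ z ∈ S, z ∉ T.edgeSide x y := by
  obtain ⟨c', hc'⟩ := hSne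
  obtain ⟨w⟩ := hT.connected c c'
  obtain ⟨x, hx, y, hy, hxy, hcx⟩ := w.exists_adj_mem_edgeSide hc hc'
  refine ⟨x, y, hxy, hy, hcx, fun z hz hzx => hx ?_⟩
  exact (hT.isAcyclic.mem_of_mem_edgeSide_of_notMem hxy hS hz hy hzx
    (hT.isAcyclic.notMem_edgeSide hxy)).1

/-- The Helly property of subtrees. -/
lemma IsTree.exists_forall_mem_of_pairwise_inter_nonempty (hT : T.IsTree) {β : Type*}
    (s : Finset β) (f : β → Set ι) (hf : ∀ i ∈ s, (T.induce (f i)).Preconnected)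
    (hpair : ∀ i ∈ s, ∀ j ∈ s, (f i ∩ f j).Nonempty) : ∃ m, ∀ i ∈ s, m ∈ f i := by
  classical
  induction s using Finset.induction_on with
  | empty => exact hT.connected.nonempty.elim fun m => ⟨m, by simp⟩
  | insert j s _ ih =>
    obtain ⟨c, hc⟩ := ih (fun i hi => hf i (by simp [hi]))
      (fun i hi k hk => hpair i (by simp [hi]) k (by simp [hk]))
    by_cases hcj : c ∈ f j
    · exact ⟨c, by simpa [hcj] using hc⟩
    -- every `f i` contains `c` and meets `f j`, which lies beyond the edge `xy`
    obtain ⟨x, y, hxy, hyj, hcx, hj⟩ := hT.exists_adj_separating (hf j (by simp))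
      (by simpa using hpair j (by simp) j (by simp)) hcj
    refine ⟨y, Finset.forall_mem_insert .. |>.mpr ⟨hyj, fun i hi => ?_⟩⟩
    obtain ⟨b, hbi, hbj⟩ := hpair i (by simp [hi]) j (by simp)
    exact (hT.isAcyclic.mem_of_mem_edgeSide_of_notMem hxy (hf i (by simp [hi])) (hc i hi) hbi
      hcx (hj b hbj)).2

lemma connected_induce_starGraph {r : ι} {S : Set ι} (hr : r ∈ S) :
    ((starGraph r).induce S).Connected := by
  refine (connected_iff_exists_forall_reachable _).mpr ⟨⟨r, hr⟩, fun a => ?_⟩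
  by_cases ha : a.1 = r
  · exact (show ⟨r, hr⟩ = a from Subtype.ext ha.symm) ▸ Reachable.refl _
  · exact Adj.reachable (by simpa using Ne.symm ha)

end SimpleGraph

namespace TreeDecomp

variable {X : Type} {G : SimpleGraph X} (D : TreeDecomp G)

lemma exists_mem_bag (v : X) : ∃ t, v ∈ D.bag t :=
  let ⟨⟨t, ht⟩⟩ := (D.support_connected v).nonempty
  ⟨t, ht⟩

lemma exists_forall_mem_bag (s : Finset X)
    (hs : ∀ a ∈ s, ∀ b ∈ s, ∃ t, a ∈ D.bag t ∧ b ∈ D.bag t) : ∃ t, ∀ a ∈ s, a ∈ D.bag t :=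
  D.isTree.exists_forall_mem_of_pairwise_inter_nonempty s (fun a => {t | a ∈ D.bag t})
    (fun a _ => (D.support_connected a).preconnected) hs

variable {D}

lemma exists_mem_support_mem_bag_of_adj {x y : D.ι} (hxy : D.tree.Adj x y) {p q : X}
    (w : G.Walk p q) (hp : ∀ t, p ∈ D.bag t → t ∈ D.tree.edgeSide x y)
    (hq : ∃ t, q ∈ D.bag t ∧ t ∉ D.tree.edgeSide x y) :
    ∃ s ∈ w.support, s ∈ D.bag x ∧ s ∈ D.bag y := by
  obtain ⟨d, hd, hd₁, hd₂⟩ := w.exists_boundary_dart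
    {v | ∀ t, v ∈ D.bag t → t ∈ D.tree.edgeSide x y} hp
    (fun h => let ⟨t, ht, htx⟩ := hq; htx (h t ht))
  obtain ⟨t, ht₁, ht₂⟩ := D.covers_edge d.adj
  obtain ⟨t', ht', ht'x⟩ : ∃ t', d.snd ∈ D.bag t' ∧ t' ∉ D.tree.edgeSide x y := by
    simpa using hd₂
  exact ⟨d.snd, w.dart_snd_mem_support_of_mem_darts hd,
    D.isTree.isAcyclic.mem_of_mem_edgeSide_of_notMem hxy (D.support_connected d.snd).preconnected
      ht₂ ht' (hd₁ t ht₁) ht'x⟩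

lemma exists_adj_separating {u v : X} (huv : ∀ t, ¬ (u ∈ D.bag t ∧ v ∈ D.bag t)) :
    ∃ x y, D.tree.Adj x y ∧ (∀ t, v ∈ D.bag t → t ∈ D.tree.edgeSide x y) ∧
      ∀ t, u ∈ D.bag t → t ∉ D.tree.edgeSide x y := by
  obtain ⟨c, hc⟩ := D.exists_mem_bag v
  obtain ⟨x, y, hxy, hyu, hcx, hu⟩ := D.isTree.exists_adj_separating
    (D.support_connected u).preconnected (D.exists_mem_bag u) (fun hcu => huv c ⟨hcu, hc⟩)
  refine ⟨x, y, hxy, fun t ht => ?_, hu⟩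
  by_contra htx
  exact huv y ⟨hyu, (D.isTree.isAcyclic.mem_of_mem_edgeSide_of_notMem hxy
    (D.support_connected v).preconnected hc ht hcx htx).2⟩

end TreeDecomp

section IndepNum

variable {X : Type} {G : SimpleGraph X}

lemma le_indepNum {s I : Finset X} (hIs : I ⊆ s) (hI : G.IsIndepSet ↑I) :
    I.card ≤ indepNum G ↑s :=
  le_csSup ⟨s.card, by
    rintro _ ⟨J, hJs, -, rfl⟩
    exact Finset.card_le_card (Finset.coe_subset.mp hJs)⟩ ⟨I, Finset.coe_subset.mpr hIs, hI, rfl⟩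

/-- The independence number is at most the size of a clique cover, here given by the fibres
of `φ`. -/
lemma indepNum_le_card_of_fibre_adj {κ : Type*} {s : Set X} (K : Finset κ) (φ : X → κ)
    (hφ : ∀ a ∈ s, φ a ∈ K) (hadj : ∀ a ∈ s, ∀ b ∈ s, a ≠ b → φ a = φ b → G.Adj a b) :
    indepNum G s ≤ K.card := by
  refine csSup_le ⟨0, ∅, by simp⟩ ?_
  rintro _ ⟨I, hIs, hI, rfl⟩
  refine Finset.card_le_card_of_injOn φ (fun a ha => hφ a (hIs ha)) fun a ha b hb hab => ?_
  by_contra hne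
  exact hI ha hb hne (hadj a (hIs ha) b (hIs hb) hne hab)

lemma treeAlpha_eq_of_forall_exists_le (D : TreeDecomp G) {k : ℕ}
    (hD : ∀ t, indepNum G ↑(D.bag t) ≤ k)
    (h : ∀ D' : TreeDecomp G, ∃ t, k ≤ indepNum G ↑(D'.bag t)) : treeAlpha G = k := by
  refine le_antisymm (Nat.sInf_le ⟨D, hD⟩) (le_csInf ⟨k, D, hD⟩ ?_)
  rintro m ⟨D', hD'⟩
  obtain ⟨t, ht⟩ := h D'
  exact ht.trans (hD' t)

end IndepNum

section Subdivision

variable {V : Type}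

abbrev SubdivVertex (V : Type) := {p : Sym2 V // ¬ p.IsDiag ∧ p ∉ (⊥ : SimpleGraph V).edgeSet}

@[simp] lemma not_completion_bot_adj_inl_inl {a b : V} :
    ¬ (completion (⊥ : SimpleGraph V)).Adj (.inl a) (.inl b) := by
  simp [completion]

@[simp] lemma completion_bot_adj_inl_inr {a : V} {p : SubdivVertex V} :
    (completion (⊥ : SimpleGraph V)).Adj (.inl a) (.inr p) ↔ a ∈ p.1 := by
  simp [completion]

@[simp] lemma completion_bot_adj_inr_inl {a : V} {p : SubdivVertex V} :
    (completion (⊥ : SimpleGraph V)).Adj (.inr p) (.inl a) ↔ a ∈ p.1 := by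
  simp [completion]

@[simp] lemma not_completion_bot_adj_inr_inr {p q : SubdivVertex V} :
    ¬ (completion (⊥ : SimpleGraph V)).Adj (.inr p) (.inr q) := by
  simp [completion]

def subdivVertex {a b : V} (h : a ≠ b) : SubdivVertex V := ⟨s(a, b), by simpa using h, by simp⟩

@[simp] lemma subdivVertex_val {a b : V} (h : a ≠ b) : (subdivVertex h).1 = s(a, b) := rfl

lemma SubdivVertex.exists_mem_ne (p : SubdivVertex V) (a : V) : ∃ w ∈ p.1, w ≠ a := by
  obtain ⟨q, hq, -⟩ := p
  induction q using Sym2.ind with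
  | _ b c =>
    by_cases hb : b = a
    · exact ⟨c, Sym2.mem_mk_right b c, fun hc => hq (by simp [hb, hc])⟩
    · exact ⟨b, Sym2.mem_mk_left b c, hb⟩

/-- `OnRoute u v w s`: `s` is an inner vertex of the path `v, vw, w, wu, u`. -/
def OnRoute (u v w : V) : V ⊕ SubdivVertex V → Prop
  | .inl a => a = w
  | .inr p => p.1 = s(v, w) ∨ p.1 = s(w, u)

variable {u v w w' : V} {s s' : V ⊕ SubdivVertex V}

lemma OnRoute.eq (hw : w ≠ u ∧ w ≠ v) (hs : OnRoute u v w s) (hs' : OnRoute u v w' s) :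
    w = w' := by
  cases s <;> simp only [OnRoute] at hs hs' <;> aesop

lemma OnRoute.not_adj (hw : w ≠ u ∧ w ≠ v) (hw' : w' ≠ u ∧ w' ≠ v) (hww' : w ≠ w')
    (hs : OnRoute u v w s) (hs' : OnRoute u v w' s') :
    ¬ (completion (⊥ : SimpleGraph V)).Adj s s' := by
  cases s <;> cases s' <;> simp only [OnRoute] at hs hs' <;> aesop

lemma OnRoute.ne_and_not_adj (huv : u ≠ v) (hw : w ≠ u ∧ w ≠ v) (hs : OnRoute u v w s) :
    s ≠ .inr (subdivVertex huv) ∧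
      ¬ (completion (⊥ : SimpleGraph V)).Adj s (.inr (subdivVertex huv)) := by
  cases s <;> simp only [OnRoute] at hs <;> simp [Subtype.ext_iff] <;> aesop

lemma exists_isIndepSet_of_onRoute [Fintype V] (huv : u ≠ v)
    {B : Finset (V ⊕ SubdivVertex V)} (hB : .inr (subdivVertex huv) ∈ B)
    (hroute : ∀ w, w ≠ u → w ≠ v → ∃ s ∈ B, OnRoute u v w s) :
    ∃ I ⊆ B, (completion (⊥ : SimpleGraph V)).IsIndepSet ↑I ∧ Fintype.card V - 1 ≤ I.card := by
  classical
  choose! f hfB hf using hroute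
  set W := (Finset.univ.erase u).erase v
  have hW : ∀ w ∈ W, w ≠ u ∧ w ≠ v := fun w hw => by
    simp only [W, Finset.mem_erase] at hw
    exact ⟨hw.2.1, hw.1⟩
  have hfW : ∀ w ∈ W, OnRoute u v w (f w) := fun w hw => hf w (hW w hw).1 (hW w hw).2
  have hinj : Set.InjOn f W := fun w hw w' hw' hww' =>
    (hfW w hw).eq (hW w hw) (hww' ▸ hfW w' hw')
  have hnotMem : .inr (subdivVertex huv) ∉ W.image f := by
    simp only [Finset.mem_image, not_exists, not_and]
    exact fun w hw => ((hfW w hw).ne_and_not_adj huv (hW w hw)).1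
  refine ⟨insert (.inr (subdivVertex huv)) (W.image f), ?_, ?_, ?_⟩
  · exact Finset.insert_subset hB
      (Finset.image_subset_iff.mpr fun w hw => hfB w (hW w hw).1 (hW w hw).2)
  · rw [Finset.coe_insert, Finset.coe_image]
    rintro _ (rfl | ⟨w, hw, rfl⟩) _ (rfl | ⟨w', hw', rfl⟩) hne
    · exact absurd rfl hne
    · exact fun h => ((hfW w' hw').ne_and_not_adj huv (hW w' hw')).2 h.symm
    · exact ((hfW w hw).ne_and_not_adj huv (hW w hw)).2
    · exact (hfW w hw).not_adj (hW w hw) (hW w' hw') (fun h => hne (h ▸ rfl)) (hfW w' hw')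
  · rw [Finset.card_insert_of_notMem hnotMem, Finset.card_image_of_injOn hinj,
      Finset.card_erase_of_mem (by simpa using huv.symm), Finset.card_erase_of_mem (by simp),
      Finset.card_univ]
    omega

lemma card_sub_one_le_indepNum_bag_of_separating [Fintype V]
    {D : TreeDecomp (completion (⊥ : SimpleGraph V))} (huv : u ≠ v) {x y : D.ι}
    (hxy : D.tree.Adj x y) (hv : ∀ t, .inl v ∈ D.bag t → t ∈ D.tree.edgeSide x y)
    (hu : ∀ t, .inl u ∈ D.bag t → t ∉ D.tree.edgeSide x y) :
    Fintype.card V - 1 ≤ indepNum (completion (⊥ : SimpleGraph V)) ↑(D.bag x) := by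
  have hux : .inl u ∉ D.bag x := fun h => hu x h mem_edgeSide_self
  have hvy : .inl v ∉ D.bag y := fun h => D.isTree.isAcyclic.notMem_edgeSide hxy (hv y h)
  have hcross (w : (completion (⊥ : SimpleGraph V)).Walk (.inl v) (.inl u)) :
      ∃ s ∈ w.support, s ≠ .inl u ∧ s ≠ .inl v ∧ s ∈ D.bag x := by
    obtain ⟨t, ht⟩ := D.exists_mem_bag (.inl u)
    obtain ⟨s, hs, hsx, hsy⟩ := D.exists_mem_support_mem_bag_of_adj hxy w hv ⟨t, ht, hu t ht⟩
    exact ⟨s, hs, fun h => hux (h ▸ hsx), fun h => hvy (h ▸ hsy), hsx⟩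
  have hdirect : .inr (subdivVertex huv) ∈ D.bag x := by
    obtain ⟨s, hs, hsu, hsv, hsx⟩ := hcross
      (.cons (v := .inr (subdivVertex huv)) (by simp) (.cons (by simp) .nil))
    simp only [Walk.support_cons, Walk.support_nil, List.mem_cons, List.not_mem_nil] at hs
    obtain rfl | rfl | rfl | ⟨⟩ := hs <;> first | contradiction | assumption
  have hroute (w : V) (hwu : w ≠ u) (hwv : w ≠ v) : ∃ s ∈ D.bag x, OnRoute u v w s := by
    obtain ⟨s, hs, hsu, hsv, hsx⟩ := hcross
      (.cons (v := .inr (subdivVertex hwv.symm)) (by simp)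
        (.cons (v := .inl w) (by simp) (.cons (v := .inr (subdivVertex hwu)) (by simp)
          (.cons (by simp) .nil))))
    simp only [Walk.support_cons, Walk.support_nil, List.mem_cons, List.not_mem_nil] at hs
    obtain rfl | rfl | rfl | rfl | rfl | ⟨⟩ := hs
    all_goals first | contradiction | exact ⟨_, hsx, by simp [OnRoute]⟩
  obtain ⟨I, hIB, hI, hcard⟩ := exists_isIndepSet_of_onRoute huv hdirect hroute
  exact hcard.trans (le_indepNum hIB hI)

lemma exists_card_sub_one_le_indepNum_bag [Fintype V]
    (D : TreeDecomp (completion (⊥ : SimpleGraph V))) :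
    ∃ t, Fintype.card V - 1 ≤ indepNum (completion (⊥ : SimpleGraph V)) ↑(D.bag t) := by
  classical
  by_cases hmeet : ∀ a b : V, ∃ t, .inl a ∈ D.bag t ∧ .inl b ∈ D.bag t
  · obtain ⟨t, ht⟩ := D.exists_forall_mem_bag (Finset.univ.image .inl) (by simpa using hmeet)
    refine ⟨t, (Nat.sub_le _ _).trans ?_⟩
    calc Fintype.card V = (Finset.univ.image (Sum.inl : V → V ⊕ SubdivVertex V)).card := by
          rw [Finset.card_image_of_injective _ Sum.inl_injective, Finset.card_univ]
      _ ≤ _ := le_indepNum (fun a ha => ht a ha) (by simp [Set.Pairwise])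
  push Not at hmeet
  obtain ⟨u, v, huv⟩ := hmeet
  have hne : u ≠ v := by
    rintro rfl
    obtain ⟨t, ht⟩ := D.exists_mem_bag (.inl u)
    exact huv t ht ht
  obtain ⟨x, y, hxy, hv, hu⟩ := D.exists_adj_separating (u := .inl u) (v := .inl v)
    fun t h => huv t h.1 h.2
  exact ⟨x, card_sub_one_le_indepNum_bag_of_separating hne hxy hv hu⟩

end Subdivision

section StarDecomposition

variable {V : Type} (v₀ : V)

/-- Bag membership in a star decomposition: the centre is `none`, the leaf `some none` belongs to
`v₀`, and the leaf `some (some q)` to a subdivision vertex `q` (empty when `v₀ ∈ q`). -/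
def InStarBag : Option (Option (SubdivVertex V)) → V ⊕ SubdivVertex V → Prop
  | none, .inl w => w ≠ v₀
  | none, .inr p => v₀ ∈ p.1
  | some none, .inl w => w = v₀
  | some none, .inr p => v₀ ∈ p.1
  | some (some q), .inl w => v₀ ∉ q.1 ∧ w ∈ q.1
  | some (some q), .inr p => v₀ ∉ q.1 ∧ p = q

lemma exists_inStarBag_inl_inr {w : V} {p : SubdivVertex V} (hw : w ∈ p.1) :
    ∃ t, InStarBag v₀ t (.inl w) ∧ InStarBag v₀ t (.inr p) := by
  by_cases hp : v₀ ∈ p.1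
  · by_cases hw₀ : w = v₀
    · exact ⟨some none, hw₀, hp⟩
    · exact ⟨none, hw₀, hp⟩
  · exact ⟨some (some p), ⟨hp, hw⟩, hp, rfl⟩

lemma connected_induce_inStarBag (a : V ⊕ SubdivVertex V) :
    ((starGraph none).induce {t | InStarBag v₀ t a}).Connected := by
  have of_eq_singleton {t₀} (h : {t | InStarBag v₀ t a} = {t₀}) :
      ((starGraph none).induce {t | InStarBag v₀ t a}).Connected := by
    rw [h, induce_singleton_eq_top]
    exact connected_top
  cases a with
  | inl w =>
    by_cases hw : w = v₀
    · subst hw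
      refine of_eq_singleton (t₀ := some none) (Set.ext fun t => ?_)
      rcases t with _ | _ | q <;> simp [InStarBag]
    · exact connected_induce_starGraph hw
  | inr p =>
    by_cases hp : v₀ ∈ p.1
    · exact connected_induce_starGraph hp
    · refine of_eq_singleton (t₀ := some (some p)) (Set.ext fun t => ?_)
      rcases t with _ | _ | q <;> simp [InStarBag, hp]
      aesop

open Classical in
noncomputable def starDecomposition [Fintype V] : TreeDecomp (completion (⊥ : SimpleGraph V)) where
  ι := Option (Option (SubdivVertex V))
  tree := starGraph none
  isTree := isTree_starGraph none
  bag t := Finset.univ.filter (InStarBag v₀ t)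
  covers_edge := by
    simp only [Finset.mem_filter, Finset.mem_univ, true_and]
    rintro (a | p) (b | q) h <;> simp at h
    · exact exists_inStarBag_inl_inr v₀ h
    · exact (exists_inStarBag_inl_inr v₀ h).imp fun _ => And.symm
  support_connected a := by
    have h : {t | a ∈ Finset.univ.filter (InStarBag v₀ t)} = {t | InStarBag v₀ t a} := by
      simp
    rw [h]
    exact connected_induce_inStarBag v₀ a

lemma mem_starDecomposition_bag [Fintype V] {t : Option (Option (SubdivVertex V))}
    {a : V ⊕ SubdivVertex V} : a ∈ (starDecomposition v₀).bag t ↔ InStarBag v₀ t a := by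
  simp [starDecomposition]

open Classical in
/-- On every bag the fibres of this map to `V \ {v₀}` are cliques. -/
noncomputable def starLabel (v₁ : V) : V ⊕ SubdivVertex V → V
  | .inl w => if w = v₀ then v₁ else w
  | .inr p => (p.exists_mem_ne v₀).choose

variable {v₀} {v₁ : V}

lemma starLabel_ne (h : v₁ ≠ v₀) (a : V ⊕ SubdivVertex V) : starLabel v₀ v₁ a ≠ v₀ := by
  cases a with
  | inl w => by_cases hw : w = v₀ <;> simp [starLabel, hw, h]
  | inr p => exact (p.exists_mem_ne v₀).choose_spec.2

lemma starLabel_inl_of_ne {w : V} (hw : w ≠ v₀) : starLabel v₀ v₁ (.inl w) = w :=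
  if_neg hw

lemma starLabel_inr_mem (p : SubdivVertex V) : starLabel v₀ v₁ (.inr p) ∈ p.1 :=
  (p.exists_mem_ne v₀).choose_spec.1

lemma adj_of_inStarBag_of_starLabel_eq (h : v₁ ≠ v₀) (t : Option (Option (SubdivVertex V)))
    {a b : V ⊕ SubdivVertex V} (ha : InStarBag v₀ t a) (hb : InStarBag v₀ t b) (hab : a ≠ b)
    (hl : starLabel v₀ v₁ a = starLabel v₀ v₁ b) : (completion (⊥ : SimpleGraph V)).Adj a b := by
  have hmem := starLabel_inr_mem (v₀ := v₀) (v₁ := v₁)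
  rcases a with w | p <;> rcases b with w' | q
  · exfalso
    rcases t with _ | _ | r <;> simp only [InStarBag] at ha hb
    · rw [starLabel_inl_of_ne ha, starLabel_inl_of_ne hb] at hl
      exact hab (congrArg _ hl)
    · exact hab (by rw [ha, hb])
    · have hw : w ≠ v₀ := fun h => ha.1 (h ▸ ha.2)
      have hw' : w' ≠ v₀ := fun h => hb.1 (h ▸ hb.2)
      rw [starLabel_inl_of_ne hw, starLabel_inl_of_ne hw'] at hl
      exact hab (congrArg _ hl)
  · rcases t with _ | _ | r <;> simp only [InStarBag] at ha hb
    · rw [starLabel_inl_of_ne ha] at hl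
      simpa [hl] using hmem q
    · simpa [ha] using hb
    · simpa [hb.2] using ha.2
  · rcases t with _ | _ | r <;> simp only [InStarBag] at ha hb
    · rw [starLabel_inl_of_ne hb] at hl
      simpa [← hl] using hmem p
    · simpa [hb] using ha
    · simpa [ha.2] using hb.2
  · exfalso
    rcases t with _ | _ | r <;> simp only [InStarBag] at ha hb
    rotate_left 2
    · exact hab (by rw [ha.2, hb.2])
    -- two subdivision vertices sharing `v₀` and a second end are equal
    all_goals exact hab (congrArg _ (Subtype.ext
      (Sym2.eq_of_ne_mem (starLabel_ne h (.inr p)) (hmem p) ha (hl ▸ hmem q) hb)))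

variable (v₀)

lemma indepNum_starDecomposition_bag_le [Fintype V] [Nontrivial V]
    (t : Option (Option (SubdivVertex V))) :
    indepNum (completion (⊥ : SimpleGraph V)) ↑((starDecomposition v₀).bag t) ≤
      Fintype.card V - 1 := by
  classical
  obtain ⟨v₁, hv₁⟩ := exists_ne v₀
  calc _ ≤ (Finset.univ.erase v₀).card :=
        indepNum_le_card_of_fibre_adj _ (starLabel v₀ v₁)
          (fun a _ => Finset.mem_erase.mpr ⟨starLabel_ne hv₁ a, Finset.mem_univ _⟩)
          (fun a ha b hb => adj_of_inStarBag_of_starLabel_eq hv₁ t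
            ((mem_starDecomposition_bag v₀).mp ha) ((mem_starDecomposition_bag v₀).mp hb))
    _ = Fintype.card V - 1 := by rw [Finset.card_erase_of_mem (Finset.mem_univ _), Finset.card_univ]

end StarDecomposition

theorem treeAlpha_completion_bot {V : Type} [Fintype V] [Nontrivial V] :
    treeAlpha (completion (⊥ : SimpleGraph V)) = Fintype.card V - 1 :=
  treeAlpha_eq_of_forall_exists_le (starDecomposition (Classical.arbitrary V))
    (indepNum_starDecomposition_bag_le _) exists_card_sub_one_le_indepNum_bag

theorem stmt8 (n : ℕ) (hn : 2 ≤ n) :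
    treeAlpha (completion (⊥ : SimpleGraph (Fin n))) = n - 1 := by
  have : Nontrivial (Fin n) := Fin.nontrivial_iff_two_le.mpr hn
  simpa using treeAlpha_completion_bot (V := Fin n)
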